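/- arXiv:1111.0775 — 2 statements merged into one kernel-verified Lean document; each statement's English description precedes it below -/
import Mathlib

section
/- A finitely generated group G is free abelian (isomorphic to ℤⁿ for some n ≥ 0) if and only if there exists a finite symmetric generating set X of G such that Geo(G,X) is 1-locally testable. -/
/-- `pre_{k-1}`, `suf_{k-1}` and `sub_k` agree: the equivalence `∼_k` on words. -/
def SimK {A : Type*} (k : ℕ) (u v : List A) : Prop :=
  u.take (k - 1) = v.take (k - 1) ∧
  u.drop (u.length - (k - 1)) = v.drop (v.length - (k - 1)) ∧
  ∀ s : List A, s.length = k → (s <:+: u ↔ s <:+: v)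

/-- A language `L` is `k`-locally testable if membership is invariant under `∼_k`. -/
def LocallyTestable {A : Type*} (k : ℕ) (L : Set (List A)) : Prop :=
  ∀ u v : List A, SimK k u v → (u ∈ L ↔ v ∈ L)

/-- The syntactic congruence of a language: `u ∼_L v` iff `sut ∈ L ↔ svt ∈ L` for all `s, t`. -/
def SynCong {A : Type*} (L : Set (List A)) (u v : List A) : Prop :=
  ∀ s t : List A, s ++ u ++ t ∈ L ↔ s ++ v ++ t ∈ L

/-- The element of `G` represented by a word over the generating set `X`. -/
def wordProd {G : Type*} [Group G] {X : Set G} (w : List X) : G :=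
  (w.map Subtype.val).prod

/-- A word over `X` is geodesic if no word representing the same element is shorter. -/
def IsGeodesic {G : Type*} [Group G] (X : Set G) (w : List X) : Prop :=
  ∀ v : List X, wordProd v = wordProd w → w.length ≤ v.length

/-- The language of all geodesic words over `X`. -/
def Geo {G : Type*} [Group G] (X : Set G) : Set (List X) :=
  {w | IsGeodesic X w}

/-- The `j`-th power of a word in the free monoid (concatenation of `j` copies). -/
def listPow {A : Type*} (w : List A) : ℕ → List A
  | 0 => []
  | n + 1 => w ++ listPow w n

/-!
For `ℤⁿ` with the generators `±eᵢ`, a word is geodesic iff it contains no letter together with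
its inverse: such a pair cancels, and otherwise the homomorphism `g ↦ ∑ sᵢ gᵢ`, with signs `sᵢ`
chosen to match the letters of the word, is `1` on every letter of the word and at most `1` on
every generator. This condition depends only on the set of letters, i.e. it is 1-locally testable.

Conversely, if geodesicity depends only on the set of letters, then powers of geodesics are
geodesic, so `G` is torsion-free; and every conjugate of a generator is a generator or trivial.
Hence generators have finite conjugacy classes, the centre has finite index, and by Schur's
theorem the commutator subgroup is finite, hence trivial. A finitely generated torsion-free
abelian group is free abelian.
-/

section Words

variable {A : Type*}

theorem simK_one_iff {u v : List A} : SimK 1 u v ↔ ∀ x, x ∈ u ↔ x ∈ v := by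
  refine ⟨fun h x => by simpa only [List.singleton_infix_iff] using h.2.2 [x] rfl,
    fun h => ⟨by simp, by simp, ?_⟩⟩
  rintro (_ | ⟨x, _ | _⟩) hs
  · simp at hs
  · simpa only [List.singleton_infix_iff] using h x
  · simp at hs

theorem locallyTestable_one_iff {L : Set (List A)} :
    LocallyTestable 1 L ↔ ∀ u v : List A, (∀ x, x ∈ u ↔ x ∈ v) → (u ∈ L ↔ v ∈ L) := by
  simp only [LocallyTestable, simK_one_iff]

theorem length_listPow (w : List A) (n : ℕ) : (listPow w n).length = n * w.length := by
  induction n with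
  | zero => simp [listPow]
  | succ n ih => rw [listPow, List.length_append, ih, Nat.succ_mul, Nat.add_comm]

theorem mem_listPow {w : List A} {n : ℕ} (hn : n ≠ 0) {x : A} : x ∈ listPow w n ↔ x ∈ w := by
  induction n with
  | zero => exact absurd rfl hn
  | succ n ih =>
    rcases Nat.eq_zero_or_pos n with rfl | hpos
    · simp [listPow]
    · simp [listPow, ih hpos.ne']

end Words

section WordProd

variable {G : Type*} [Group G] {X : Set G}

@[simp]
theorem wordProd_nil : wordProd ([] : List X) = 1 := rfl

@[simp]
theorem wordProd_cons (x : X) (w : List X) : wordProd (x :: w) = x * wordProd w :=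
  List.prod_cons

@[simp]
theorem wordProd_append (u v : List X) : wordProd (u ++ v) = wordProd u * wordProd v := by
  simp [wordProd]

theorem wordProd_listPow (w : List X) (n : ℕ) : wordProd (listPow w n) = wordProd w ^ n := by
  induction n with
  | zero => simp [listPow]
  | succ n ih => rw [listPow, wordProd_append, ih, pow_succ']

theorem exists_wordProd_eq (hsym : ∀ x ∈ X, x⁻¹ ∈ X) {g : G} (hg : g ∈ Subgroup.closure X) :
    ∃ w : List X, wordProd w = g := by
  induction hg using Subgroup.closure_induction'' with
  | mem x hx => exact ⟨[⟨x, hx⟩], by simp⟩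
  | inv_mem x hx => exact ⟨[⟨x⁻¹, hsym x hx⟩], by simp⟩
  | one => exact ⟨[], rfl⟩
  | mul x y _ _ hx hy =>
    obtain ⟨u, rfl⟩ := hx
    obtain ⟨v, rfl⟩ := hy
    exact ⟨u ++ v, wordProd_append u v⟩

theorem exists_isGeodesic (w : List X) :
    ∃ v : List X, IsGeodesic X v ∧ wordProd v = wordProd w := by
  classical
  have hex : ∃ n, ∃ v : List X, wordProd v = wordProd w ∧ v.length = n := ⟨_, w, rfl, rfl⟩
  obtain ⟨v, hv, hlen⟩ := Nat.find_spec hex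
  exact ⟨v, fun u hu => hlen ▸ Nat.find_min' hex ⟨u, hu.trans hv, rfl⟩, hv⟩

theorem wordProd_eq_of_perm {G : Type*} [CommGroup G] {X : Set G} {u v : List X}
    (h : u.Perm v) : wordProd u = wordProd v :=
  (h.map _).prod_eq

end WordProd

section Calibration

variable {G : Type*} [Group G] {X : Set G}

theorem isGeodesic_of_calibration (ψ : G →* Multiplicative ℤ) (hX : ∀ x ∈ X, (ψ x).toAdd ≤ 1)
    {w : List X} (hw : ∀ x ∈ w, (ψ x).toAdd = 1) : IsGeodesic X w := by
  have hle : ∀ v : List X, (ψ (wordProd v)).toAdd ≤ v.length := by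
    intro v
    induction v with
    | nil => simp
    | cons x v ih =>
      simp only [wordProd_cons, map_mul, toAdd_mul, List.length_cons]
      push_cast
      linarith [hX x x.2]
  have heq : ∀ w : List X, (∀ x ∈ w, (ψ x).toAdd = 1) → (ψ (wordProd w)).toAdd = w.length := by
    intro w hw
    induction w with
    | nil => simp
    | cons x w ih =>
      simp only [wordProd_cons, map_mul, toAdd_mul, List.length_cons, List.mem_cons] at hw ⊢
      rw [hw x (.inl rfl), ih fun y hy => hw y (.inr hy)]; push_cast; ring
  intro v hv
  exact_mod_cast (heq w hw).symm.trans_le (hv ▸ hle v)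

theorem not_isGeodesic_of_mul_eq_one {G : Type*} [CommGroup G] {X : Set G} {w : List X}
    {a b : X} (ha : a ∈ w) (hb : b ∈ w) (hab : a ≠ b) (h : (a : G) * b = 1) :
    ¬ IsGeodesic X w := by
  classical
  intro hw
  have hperm : w.Perm (a :: b :: (w.erase a).erase b) :=
    (List.perm_cons_erase ha).trans
      ((List.perm_cons_erase ((List.mem_erase_of_ne hab.symm).2 hb)).cons a)
  have hle := hw ((w.erase a).erase b) (by
    rw [wordProd_eq_of_perm hperm, wordProd_cons, wordProd_cons, ← mul_assoc, h, one_mul])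
  have hlen := hperm.length_eq
  simp only [List.length_cons] at hlen
  omega

end Calibration

section StandardGenerators

variable {n : ℕ}

def stdGens (n : ℕ) : Set (Multiplicative (Fin n → ℤ)) :=
  ⋃ i, {Multiplicative.ofAdd (Pi.single i 1), (Multiplicative.ofAdd (Pi.single i 1))⁻¹}

theorem mem_stdGens {x : Multiplicative (Fin n → ℤ)} :
    x ∈ stdGens n ↔ ∃ i, x = Multiplicative.ofAdd (Pi.single i 1) ∨
      x = (Multiplicative.ofAdd (Pi.single i 1))⁻¹ := by
  simp [stdGens]

theorem finite_stdGens : (stdGens n).Finite :=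
  Set.finite_iUnion fun _ => Set.toFinite _

theorem inv_mem_stdGens : ∀ x ∈ stdGens n, x⁻¹ ∈ stdGens n := by
  simp only [mem_stdGens]
  rintro _ ⟨i, rfl | rfl⟩
  exacts [⟨i, .inr rfl⟩, ⟨i, .inl (inv_inv _)⟩]

theorem one_notMem_stdGens : (1 : Multiplicative (Fin n → ℤ)) ∉ stdGens n := by
  have hne : ∀ i, Multiplicative.ofAdd (Pi.single i 1 : Fin n → ℤ) ≠ 1 := fun i h => by
    simpa using congrFun (congrArg Multiplicative.toAdd h) i
  simp only [mem_stdGens, not_exists]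
  rintro i (h | h)
  exacts [hne i h.symm, hne i (inv_eq_one.mp h.symm)]

theorem closure_stdGens : Subgroup.closure (stdGens n) = ⊤ := by
  refine eq_top_iff.mpr fun g _ => ?_
  have hg : g = ∏ i, Multiplicative.ofAdd (Pi.single i 1 : Fin n → ℤ) ^ g.toAdd i := by
    apply Multiplicative.toAdd.injective
    simpa only [toAdd_prod, toAdd_zpow, toAdd_ofAdd] using pi_eq_sum_univ' g.toAdd
  rw [hg]
  exact Subgroup.prod_mem _ fun i _ => Subgroup.zpow_mem _ (Subgroup.subset_closure
    (mem_stdGens.mpr ⟨i, .inl rfl⟩)) _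

theorem isGeodesic_stdGens_iff {w : List (stdGens n)} :
    IsGeodesic (stdGens n) w ↔ ∀ a ∈ w, ∀ b ∈ w, (a : Multiplicative (Fin n → ℤ)) * b ≠ 1 := by
  classical
  refine ⟨fun hw a ha b hb hab => not_isGeodesic_of_mul_eq_one ha hb ?_ hab hw, fun hw => ?_⟩
  · rintro rfl
    rw [← sq, pow_eq_one_iff_left two_ne_zero] at hab
    exact one_notMem_stdGens (hab ▸ a.2)
  let e : Fin n → Multiplicative (Fin n → ℤ) := fun i => Multiplicative.ofAdd (Pi.single i 1)
  let s : Fin n → ℤ := fun i =>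
    if ∃ y ∈ w, (y : Multiplicative (Fin n → ℤ)) = (e i)⁻¹ then -1 else 1
  let ψ : Multiplicative (Fin n → ℤ) →* Multiplicative ℤ := AddMonoidHom.toMultiplicative
    (AddMonoidHom.mk' (fun g => ∑ i, s i * g i) fun g h => by
      simp [mul_add, Finset.sum_add_distrib])
  have hψ : ∀ i, (ψ (e i)).toAdd = s i := by intro i; simp [ψ, e, Pi.single_apply]
  refine isGeodesic_of_calibration ψ ?_ ?_
  · simp only [mem_stdGens]
    rintro _ ⟨i, rfl | rfl⟩
    · rw [hψ]; simp only [s]; split_ifs <;> norm_num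
    · rw [map_inv, toAdd_inv, hψ]; simp only [s]; split_ifs <;> norm_num
  · rintro ⟨x, hx⟩ hxw
    obtain ⟨i, rfl | rfl⟩ := mem_stdGens.mp hx
    · rw [hψ]; simp only [s]
      rw [if_neg]
      rintro ⟨y, hy, hyx⟩
      exact hw _ hxw y hy (by rw [hyx]; exact mul_inv_cancel _)
    · rw [map_inv, toAdd_inv, hψ]; simp only [s]
      rw [if_pos ⟨_, hxw, rfl⟩]; norm_num

theorem locallyTestable_geo_stdGens : LocallyTestable 1 (Geo (stdGens n)) := by
  refine locallyTestable_one_iff.mpr fun u v huv => ?_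
  simp only [Geo, Set.mem_ofPred_eq, isGeodesic_stdGens_iff, huv]

end StandardGenerators

section Transport

variable {G H : Type*} [Group G] [Group H]

theorem closure_preimage_mulEquiv_eq_top (e : G ≃* H) {X : Set H} (h : Subgroup.closure X = ⊤) :
    Subgroup.closure (e ⁻¹' X) = ⊤ := by
  have himage : ⇑e ⁻¹' X = e.symm.toMonoidHom '' X := (e.toEquiv.image_symm_eq_preimage X).symm
  rw [himage, ← MonoidHom.map_closure, h, Subgroup.map_top_of_surjective _ e.symm.surjective]

theorem locallyTestable_geo_preimage (e : G ≃* H) {X : Set H}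
    (hLT : LocallyTestable 1 (Geo X)) : LocallyTestable 1 (Geo (e ⁻¹' X)) := by
  let φ : e ⁻¹' X ≃ X := e.toEquiv.subtypeEquiv fun _ => Iff.rfl
  have hprod : ∀ w, wordProd (w.map φ) = e (wordProd w) := by
    intro w
    induction w with
    | nil => simp
    | cons x w ih => rw [List.map_cons, wordProd_cons, wordProd_cons, ih, map_mul]; rfl
  have hgeo : ∀ w, IsGeodesic (e ⁻¹' X) w ↔ IsGeodesic X (w.map φ) := by
    refine fun w => ⟨fun hw v hv => ?_, fun hw v hv => ?_⟩
    · obtain ⟨u, rfl⟩ := List.map_surjective_iff.mpr φ.surjective v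
      simpa using hw u (e.injective (by rw [← hprod, ← hprod, hv]))
    · simpa using hw (v.map φ) (by rw [hprod, hprod, hv])
  rw [locallyTestable_one_iff] at hLT ⊢
  exact fun u v huv => (hgeo u).trans <|
    (hLT _ _ fun y => by simp only [List.mem_map, huv]).trans (hgeo v).symm

end Transport

section OneLocallyTestable

variable {G : Type*} [Group G] {X : Set G}

theorem isGeodesic_listPow (hLT : LocallyTestable 1 (Geo X)) {w : List X} (hw : IsGeodesic X w)
    {n : ℕ} (hn : n ≠ 0) : IsGeodesic X (listPow w n) :=
  (locallyTestable_one_iff.mp hLT _ _ fun _ => mem_listPow hn).mpr hw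

theorem wordProd_eq_one_of_pow_eq_one (hLT : LocallyTestable 1 (Geo X)) (w : List X) {n : ℕ}
    (hn : n ≠ 0) (h : wordProd w ^ n = 1) : wordProd w = 1 := by
  obtain ⟨v, hv, hvw⟩ := exists_isGeodesic w
  have hle := isGeodesic_listPow hLT hv hn [] (by rw [wordProd_listPow, hvw, h, wordProd_nil])
  rw [length_listPow, List.length_nil, Nat.le_zero, Nat.mul_eq_zero,
    List.length_eq_zero_iff] at hle
  rw [← hvw, hle.resolve_left hn, wordProd_nil]

/-- If `b a b⁻¹` had a geodesic of length at least `2`, the geodesic of its cube would have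
length at least `6`, whereas `b a a a b⁻¹` has length `5`. -/
theorem conj_mem_insert_one_of_mem (hsym : ∀ x ∈ X, x⁻¹ ∈ X) (hLT : LocallyTestable 1 (Geo X))
    {a b : G} (ha : a ∈ X) (hb : b ∈ X) : b * a * b⁻¹ ∈ insert 1 X := by
  let x : X := ⟨a, ha⟩
  let y : X := ⟨b, hb⟩
  let y' : X := ⟨b⁻¹, hsym b hb⟩
  obtain ⟨v, hv, hvw⟩ := exists_isGeodesic [y, x, y']
  have hconj : b * a * b⁻¹ = wordProd v := by simp [hvw, x, y, y', mul_assoc]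
  match v, hv, hvw with
  | [], _, _ => exact .inl hconj
  | [c], _, _ => exact .inr (by simp [hconj])
  | c :: d :: v, hv, hvw =>
    have hle := isGeodesic_listPow hLT hv three_ne_zero [y, x, x, x, y']
      (by simp [wordProd_listPow, hvw, x, y, y', pow_three, mul_assoc])
    simp [length_listPow] at hle
    omega

theorem conj_mem_insert_one (hsym : ∀ x ∈ X, x⁻¹ ∈ X) (hgen : Subgroup.closure X = ⊤)
    (hLT : LocallyTestable 1 (Geo X)) (g : G) {a : G} (ha : a ∈ insert 1 X) :
    g * a * g⁻¹ ∈ insert 1 X := by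
  have hg : g ∈ Subgroup.closure X := hgen ▸ Subgroup.mem_top g
  have hletter : ∀ b ∈ X, ∀ a ∈ insert 1 X, b * a * b⁻¹ ∈ insert 1 X := by
    rintro b hb a (rfl | ha)
    · simp
    · exact conj_mem_insert_one_of_mem hsym hLT ha hb
  induction hg using Subgroup.closure_induction'' generalizing a with
  | mem b hb => exact hletter b hb a ha
  | inv_mem b hb => exact hletter b⁻¹ (hsym b hb) a ha
  | one => simpa using ha
  | mul b c _ _ hb hc =>
    have e : b * c * a * (b * c)⁻¹ = b * (c * a * c⁻¹) * b⁻¹ := by group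
    exact e ▸ hb (hc ha)

theorem conjClass_subset_insert_one (hsym : ∀ x ∈ X, x⁻¹ ∈ X) (hgen : Subgroup.closure X = ⊤)
    (hLT : LocallyTestable 1 (Geo X)) {a : G} (ha : a ∈ X) :
    (ConjClasses.mk a).carrier ⊆ insert 1 X := by
  intro b hb
  obtain ⟨g, rfl⟩ := isConj_iff.mp
    (ConjClasses.mk_eq_mk_iff_isConj.mp (ConjClasses.mem_carrier_iff_mk_eq.mp hb)).symm
  exact conj_mem_insert_one hsym hgen hLT g (.inr ha)

end OneLocallyTestable

namespace Subgroup

open scoped commutatorElement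

variable {G : Type*} [Group G]

theorem finiteIndex_centralizer_singleton_of_finite {g : G}
    (h : (ConjClasses.mk g).carrier.Finite) : (centralizer {g}).FiniteIndex := by
  have hindex : (centralizer {g}).index = (MulAction.stabilizer (ConjAct G) g).index := by
    rw [centralizer_eq_comap_stabilizer]
    exact index_comap_of_surjective _ ConjAct.toConjAct.surjective
  refine ⟨?_⟩
  rw [hindex, MulAction.index_stabilizer, ConjAct.orbit_eq_carrier_conjClasses]
  exact (Set.ncard_pos h).mpr ⟨g, ConjClasses.mem_carrier_mk⟩ |>.ne'

theorem finiteIndex_center_of_finite_conjClasses {S : Set G} (hS : S.Finite)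
    (hgen : closure S = ⊤) (h : ∀ s ∈ S, (ConjClasses.mk s).carrier.Finite) :
    (center G).FiniteIndex := by
  have := hS.to_subtype
  rw [center_eq_infi' hgen]
  exact finiteIndex_iInf fun s => finiteIndex_centralizer_singleton_of_finite (h s s.2)

theorem commutatorElement_mul_mul_of_mem_center {z w : G} (hz : z ∈ center G)
    (hw : w ∈ center G) (a b : G) : ⁅a * z, b * w⁆ = ⁅a, b⁆ := by
  rw [mem_center_iff] at hz hw
  calc ⁅a * z, b * w⁆ = a * (b * w * z) * z⁻¹ * a⁻¹ * w⁻¹ * b⁻¹ := by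
        rw [hz (b * w), commutatorElement_def]; group
    _ = a * b * (a⁻¹ * w) * w⁻¹ * b⁻¹ := by rw [hw a⁻¹]; group
    _ = ⁅a, b⁆ := by rw [commutatorElement_def]; group

instance finite_commutatorSet_of_finiteIndex_center [(center G).FiniteIndex] :
    Finite (commutatorSet G) := by
  refine Set.Finite.to_subtype <| (Set.finite_range fun q : (G ⧸ center G) × (G ⧸ center G) =>
    ⁅q.1.out, q.2.out⁆).subset ?_
  rintro _ ⟨a, b, rfl⟩
  obtain ⟨z, hz⟩ := QuotientGroup.mk_out_eq_mul (center G) a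
  obtain ⟨w, hw⟩ := QuotientGroup.mk_out_eq_mul (center G) b
  exact ⟨(a, b), by simp only [hz, hw, commutatorElement_mul_mul_of_mem_center z.2 w.2]⟩

end Subgroup

section FreeAbelian

open scoped commutatorElement

variable {G : Type*} [Group G]

theorem mul_comm_of_finite_commutator [Finite (commutator G)]
    (htf : ∀ g : G, IsOfFinOrder g → g = 1) (a b : G) : a * b = b * a := by
  rw [← commutatorElement_eq_one_iff_mul_comm]
  let c : commutator G := ⟨⁅a, b⁆, Subgroup.commutator_mem_commutator (Subgroup.mem_top a)
    (Subgroup.mem_top b)⟩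
  exact htf _ ((commutator G).subtype.isOfFinOrder (isOfFinOrder_of_finite c))

theorem exists_mulEquiv_multiplicative_pi_int (G : Type*) [CommGroup G] [Group.FG G]
    [IsMulTorsionFree G] : ∃ n : ℕ, Nonempty (G ≃* Multiplicative (Fin n → ℤ)) := by
  obtain ⟨n, b⟩ := Module.basisOfFiniteTypeTorsionFree' (R := ℤ) (M := Additive G)
  exact ⟨n, ⟨AddEquiv.toMultiplicativeRight b.equivFun.toAddEquiv⟩⟩

end FreeAbelian

theorem exists_mulEquiv_of_locallyTestable_geo {G : Type*} [Group G] {X : Set G}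
    (hfin : X.Finite) (hsym : ∀ x ∈ X, x⁻¹ ∈ X) (hgen : Subgroup.closure X = ⊤)
    (hLT : LocallyTestable 1 (Geo X)) :
    ∃ n : ℕ, Nonempty (G ≃* Multiplicative (Fin n → ℤ)) := by
  have htf : ∀ g : G, IsOfFinOrder g → g = 1 := by
    intro g hg
    obtain ⟨w, rfl⟩ := exists_wordProd_eq hsym (hgen ▸ Subgroup.mem_top g)
    exact wordProd_eq_one_of_pow_eq_one hLT w hg.orderOf_pos.ne' (pow_orderOf_eq_one _)
  have : (Subgroup.center G).FiniteIndex :=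
    Subgroup.finiteIndex_center_of_finite_conjClasses hfin hgen fun a ha =>
      (hfin.insert 1).subset (conjClass_subset_insert_one hsym hgen hLT ha)
  let : CommGroup G := { mul_comm := mul_comm_of_finite_commutator htf }
  have : Group.FG G := Group.fg_iff.mpr ⟨X, hgen, hfin⟩
  have : IsMulTorsionFree G := .of_not_isOfFinOrder fun g hg hfo => hg (htf g hfo)
  exact exists_mulEquiv_multiplicative_pi_int G

theorem stmt0_general {G : Type*} [Group G] :
    (∃ n : ℕ, Nonempty (G ≃* Multiplicative (Fin n → ℤ))) ↔
      (∃ X : Set G, X.Finite ∧ (∀ x ∈ X, x⁻¹ ∈ X) ∧ Subgroup.closure X = ⊤ ∧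
        LocallyTestable 1 (Geo X)) := by
  constructor
  · rintro ⟨n, ⟨e⟩⟩
    refine ⟨e ⁻¹' stdGens n, finite_stdGens.preimage e.injective.injOn, fun x hx => ?_,
      closure_preimage_mulEquiv_eq_top e closure_stdGens,
      locallyTestable_geo_preimage e locallyTestable_geo_stdGens⟩
    simpa only [Set.mem_preimage, map_inv] using inv_mem_stdGens _ hx
  · rintro ⟨X, hfin, hsym, hgen, hLT⟩
    exact exists_mulEquiv_of_locallyTestable_geo hfin hsym hgen hLT

/-- A finitely generated group is free abelian (≅ ℤⁿ for some n) iff it has a finite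
symmetric generating set whose language of geodesics is 1-locally testable. -/
theorem stmt0 {G : Type*} [Group G]
    (hfg : ∃ S : Set G, S.Finite ∧ Subgroup.closure S = ⊤) :
    (∃ n : ℕ, Nonempty (G ≃* Multiplicative (Fin n → ℤ))) ↔
      (∃ X : Set G, X.Finite ∧ (∀ x ∈ X, x⁻¹ ∈ X) ∧ Subgroup.closure X = ⊤ ∧
        LocallyTestable 1 (Geo X)) :=
  stmt0_general
end

section
/- Let X be a finite set, let k > 0 be a natural number, and set N = 2k(|X|^{2k} + 1). Then for every word w over X of length at least N: (a) w² ∼_k w^j for every j ≥ 2; and (b) there exists a cyclic permutation w̃ of w (that is, w = pq and w̃ = qp for some words p, q over X) such that w̃ ∼_k w̃^j for every j ≥ 1. -/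
namespace List

variable {α : Type*} {s x y z p u v : List α} {n : ℕ}

theorem infix_append_or_infix_append_of_infix_append_append
    (h : s <:+: x ++ y ++ z) (hs : s.length ≤ y.length + 1) :
    s <:+: x ++ y ∨ s <:+: y ++ z := by
  rcases infix_append_iff.mp h with h | h | ⟨l₁, l₂, rfl, h₁, h₂⟩
  · exact .inl h
  · exact .inr (infix_append_of_infix_right h)
  by_cases hl : l₁.length ≤ y.length
  · have h₁' : l₁ <:+ y := suffix_of_suffix_length_le h₁ (suffix_append x y) hl
    exact .inr (infix_append_iff.mpr (.inr (.inr ⟨l₁, l₂, rfl, h₁', h₂⟩)))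
  · have hl₂ : l₂ = [] := by
      rw [← length_eq_zero_iff]
      rw [length_append] at hs
      omega
    exact .inl (by simpa [hl₂] using h₁.isInfix)

theorem take_eq_take_of_prefix (hu : p <+: u) (hv : p <+: v) (hn : n ≤ p.length) :
    u.take n = v.take n := by
  obtain ⟨u', rfl⟩ := hu
  obtain ⟨v', rfl⟩ := hv
  rw [take_append_of_le_length hn, take_append_of_le_length hn]

theorem drop_length_sub_eq_of_suffix (hu : p <:+ u) (hv : p <:+ v) (hn : n ≤ p.length) :
    u.drop (u.length - n) = v.drop (v.length - n) := by
  obtain ⟨u', rfl⟩ := hu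
  obtain ⟨v', rfl⟩ := hv
  rw [length_append, length_append, Nat.add_sub_assoc hn, Nat.add_sub_assoc hn,
    drop_length_add_append, drop_length_add_append]

end List

section Words

variable {A : Type*} {k j : ℕ} {s t u v w : List A}

theorem listPow_one (w : List A) : listPow w 1 = w :=
  List.append_nil w

theorem listPow_add_two (w : List A) (j : ℕ) : listPow w (j + 2) = w ++ w ++ listPow w j :=
  (List.append_assoc w w _).symm

theorem prefix_listPow (hj : 1 ≤ j) : w <+: listPow w j := by
  obtain ⟨j, rfl⟩ := Nat.exists_eq_add_of_le' hj
  exact List.prefix_append w _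

theorem suffix_listPow : ∀ {j : ℕ}, 1 ≤ j → w <:+ listPow w j
  | 1, _ => by rw [listPow_one]
  | j + 2, _ => (suffix_listPow (Nat.le_add_left 1 j)).trans (List.suffix_append w _)

theorem infix_append_self_of_infix_listPow (hs : s.length ≤ w.length + 1) :
    ∀ {j : ℕ}, s <:+: listPow w j → s <:+: w ++ w
  | 0, h => by rw [List.infix_nil.mp h]; exact List.nil_infix
  | 1, h => (listPow_one w ▸ h).trans List.infix_append_left
  | j + 2, h => by
    rw [listPow_add_two] at h
    exact (List.infix_append_or_infix_append_of_infix_append_append h hs).elim id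
      (infix_append_self_of_infix_listPow hs (j := j + 1))

theorem SimK.refl (k : ℕ) (u : List A) : SimK k u u :=
  ⟨rfl, rfl, fun _ _ => Iff.rfl⟩

theorem SimK.trans (huv : SimK k u v) (hvw : SimK k v w) : SimK k u w :=
  ⟨huv.1.trans hvw.1, huv.2.1.trans hvw.2.1, fun s hs => (huv.2.2 s hs).trans (hvw.2.2 s hs)⟩

theorem simK_of_prefix_of_suffix (hk : k ≤ t.length + 1) (hu : t <+: u) (hv : t <+: v)
    (hu' : t <:+ u) (hv' : t <:+ v) (h : ∀ s : List A, s.length = k → (s <:+: u ↔ s <:+: v)) :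
    SimK k u v :=
  ⟨List.take_eq_take_of_prefix hu hv (by omega),
    List.drop_length_sub_eq_of_suffix hu' hv' (by omega), h⟩

theorem simK_append_self_listPow (hk : k ≤ w.length + 1) (hj : 2 ≤ j) :
    SimK k (w ++ w) (listPow w j) := by
  obtain ⟨j, rfl⟩ := Nat.exists_eq_add_of_le' hj
  refine simK_of_prefix_of_suffix hk (List.prefix_append w w) (prefix_listPow (by omega))
    (List.suffix_append w w) (suffix_listPow (by omega)) fun s hs => ⟨fun h => ?_, ?_⟩
  · rw [listPow_add_two]
    exact h.trans List.infix_append_left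
  · exact infix_append_self_of_infix_listPow (by omega)

theorem simK_listPow_of_infix_append_self (hk : k ≤ t.length + 1)
    (h : ∀ s : List A, s.length = k → s <:+: t ++ t → s <:+: t) (hj : 1 ≤ j) :
    SimK k t (listPow t j) := by
  rcases Nat.lt_or_ge j 2 with hj₂ | hj₂
  · rw [show j = 1 by omega, listPow_one]
    exact SimK.refl k t
  · have hsq : SimK k t (t ++ t) :=
      simK_of_prefix_of_suffix hk (List.prefix_refl t) (List.prefix_append t t)
        (List.suffix_refl t) (List.suffix_append t t)
        fun s hs => ⟨fun hst => hst.trans List.infix_append_left, h s hs⟩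
    exact hsq.trans (simK_append_self_listPow hk hj₂)

theorem infix_of_infix_append_self {b₁ b₂ : List A} (h₁ : b₁ <:+ t) (h₂ : b₂ <+: t)
    (hb : b₁ ++ b₂ <:+: t) (hs₁ : s.length ≤ b₁.length + 1) (hs₂ : s.length ≤ b₂.length + 1)
    (h : s <:+: t ++ t) : s <:+: t := by
  obtain ⟨t₁, ht₁⟩ := h₁
  obtain ⟨t₂, ht₂⟩ := h₂
  have e₂ : t ++ t = t ++ b₂ ++ t₂ := by rw [List.append_assoc, ht₂]
  rcases List.infix_append_or_infix_append_of_infix_append_append (e₂ ▸ h) hs₂ with h | h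
  · have e₁ : t ++ b₂ = t₁ ++ b₁ ++ b₂ := by rw [ht₁]
    rcases List.infix_append_or_infix_append_of_infix_append_append (e₁ ▸ h) hs₁ with h | h
    · rwa [ht₁] at h
    · exact h.trans hb
  · rwa [ht₂] at h

theorem exists_rotation_infix_append_self_imp_infix {x b y z : List A} (hb : 2 * k ≤ b.length) :
    ∃ p q : List A, x ++ b ++ y ++ b ++ z = p ++ q ∧
      ∀ s : List A, s.length = k → s <:+: q ++ p ++ (q ++ p) → s <:+: q ++ p := by
  refine ⟨x ++ b.take k, b.drop k ++ y ++ b ++ z, ?_, fun s hs =>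
    infix_of_infix_append_self (b₁ := b.take k) (b₂ := b.drop k) ?_ ?_ ?_ ?_ ?_⟩
  · nth_rewrite 1 [← List.take_append_drop k b]
    simp only [List.append_assoc]
  · exact (List.suffix_append x _).trans (List.suffix_append _ _)
  · simp only [List.append_assoc]
    exact List.prefix_append _ _
  · rw [List.take_append_drop]
    exact List.infix_append_of_infix_left (List.infix_append (b.drop k ++ y) b z)
  · simp only [List.length_take]
    omega
  · simp only [List.length_drop]
    omega

theorem eq_append_append_of_take_drop_eq {i j m : ℕ} (hij : i + m ≤ j)
    (h : (w.drop i).take m = (w.drop j).take m) :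
    ∃ x y z : List A, w = x ++ (w.drop i).take m ++ y ++ (w.drop i).take m ++ z := by
  have hsplit : ∀ l n, w.drop l = (w.drop l).take n ++ w.drop (l + n) := fun l n => by
    rw [← List.drop_drop, List.take_append_drop]
  refine ⟨w.take i, (w.drop (i + m)).take (j - (i + m)), w.drop (j + m), ?_⟩
  conv_lhs => rw [← List.take_append_drop i w, hsplit i m, hsplit (i + m) (j - (i + m)),
    Nat.add_sub_cancel' hij, hsplit j m, ← h]
  simp only [List.append_assoc]

theorem exists_take_drop_eq_of_card_pow [Fintype A] {m : ℕ}
    (hw : m * (Fintype.card A ^ m + 1) ≤ w.length) :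
    ∃ i j, i + m ≤ j ∧ j + m ≤ w.length ∧ (w.drop i).take m = (w.drop j).take m := by
  have hblock (t : Fin (Fintype.card A ^ m + 1)) : m * t + m ≤ w.length :=
    calc m * t + m = m * (t + 1) := by ring
      _ ≤ m * (Fintype.card A ^ m + 1) := Nat.mul_le_mul_left m t.isLt
      _ ≤ w.length := hw
  let block (t : Fin (Fintype.card A ^ m + 1)) : List.Vector A m :=
    ⟨(w.drop (m * t)).take m, by simp only [List.length_take, List.length_drop]; grind⟩
  obtain ⟨t, t', hne, heq⟩ := Fintype.exists_ne_map_eq_of_card_lt block (by simp [card_vector])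
  wlog hlt : t < t' generalizing t t'
  · exact this t' t hne.symm heq.symm (lt_of_le_of_ne (not_lt.mp hlt) hne.symm)
  exact ⟨m * t, m * t', by rw [← Nat.mul_succ]; exact Nat.mul_le_mul_left m hlt, hblock t',
    congrArg Subtype.val heq⟩

theorem exists_eq_append_append_of_card_pow [Fintype A] {m : ℕ}
    (hw : m * (Fintype.card A ^ m + 1) ≤ w.length) :
    ∃ x b y z : List A, b.length = m ∧ w = x ++ b ++ y ++ b ++ z := by
  obtain ⟨i, j, hij, hj, h⟩ := exists_take_drop_eq_of_card_pow hw
  obtain ⟨x, y, z, hw⟩ := eq_append_append_of_take_drop_eq hij h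
  exact ⟨x, (w.drop i).take m, y, z, by simp only [List.length_take, List.length_drop]; omega, hw⟩

end Words

theorem stmt9_general {A : Type*} [Fintype A] (k : ℕ) (w : List A)
    (hw : 2 * k * (Fintype.card A ^ (2 * k) + 1) ≤ w.length) :
    (∀ j : ℕ, 2 ≤ j → SimK k (w ++ w) (listPow w j)) ∧
    (∃ p q : List A, w = p ++ q ∧
      ∀ j : ℕ, 1 ≤ j → SimK k (q ++ p) (listPow (q ++ p) j)) := by
  obtain ⟨x, b, y, z, hb, rfl⟩ := exists_eq_append_append_of_card_pow hw
  have hk : k ≤ (x ++ b ++ y ++ b ++ z).length + 1 := by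
    simp only [List.length_append]
    omega
  refine ⟨fun j hj => simK_append_self_listPow hk hj, ?_⟩
  obtain ⟨p, q, hpq, hfactors⟩ := exists_rotation_infix_append_self_imp_infix (x := x) (y := y)
    (z := z) hb.ge
  rw [hpq, List.length_append, Nat.add_comm p.length, ← List.length_append] at hk
  exact ⟨p, q, hpq, fun j hj => simK_listPow_of_infix_append_self hk hfactors hj⟩

/-- If `w` has length at least `N = 2k(|X|^{2k} + 1)`, then `w² ∼_k w^j` for all `j ≥ 2`,
and some cyclic permutation `w̃ = qp` of `w = pq` satisfies `w̃ ∼_k w̃^j` for all `j ≥ 1`. -/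
theorem stmt9 {A : Type*} [Fintype A] (k : ℕ) (hk : 0 < k) (w : List A)
    (hw : 2 * k * (Fintype.card A ^ (2 * k) + 1) ≤ w.length) :
    (∀ j : ℕ, 2 ≤ j → SimK k (w ++ w) (listPow w j)) ∧
    (∃ p q : List A, w = p ++ q ∧
      ∀ j : ℕ, 1 ≤ j → SimK k (q ++ p) (listPow (q ++ p) j)) :=
  stmt9_general k w hw
end
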